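/- arXiv:2404.12723 — 4 statements merged into one kernel-verified Lean document; each statement's English description precedes it below -/
import Mathlib

section
/- Let R_{−1} be the derivation on the descendent algebra D with R_{−1}(ch_i(γ)) = ch_{i−1}(γ) (and ch_{−1} = 0), and for k ≥ 2 let R_{−k} be the derivation with R_{−k}(ch_i(γ)) = ((i−k)!/(i−1)!) ch_{i−k}(γ) if i ≥ k and 0 otherwise. Then for all integers l, k ≥ 2, [R_{−l}, R_{−k}] = (l − k) R_{−l−k}. -/
/-- bracket of negative Virasoro derivations
[R_{−l}, R_{−k}] = (l − k) R_{−l−k} for l, k ≥ 2. -/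
theorem stmt_5 (A : Type*) [CommRing A] [Algebra ℚ A]
    (H : Type*) [AddCommGroup H] [Module ℚ H]
    (ch : ℤ → H →ₗ[ℚ] A)
    (hneg : ∀ i : ℤ, i < 0 → ch i = 0)
    (hgen : Algebra.adjoin ℚ (⋃ i : ℤ, Set.range fun γ : H => ch i γ) = ⊤)
    (R : ℕ → Derivation ℚ A A)
    (hR : ∀ k : ℕ, 2 ≤ k → ∀ (i : ℤ) (γ : H),
      R k (ch i γ) =
        (if (k : ℤ) ≤ i then ((i - k).toNat.factorial : ℚ) / ((i - 1).toNat.factorial : ℚ)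
          else 0) • ch (i - k) γ)
    (l k : ℕ) (hl : 2 ≤ l) (hk : 2 ≤ k) :
    ∀ a : A, R l (R k a) - R k (R l a) = ((l : ℚ) - (k : ℚ)) • R (l + k) a := by
  have key : (⁅R l, R k⁆ : Derivation ℚ A A) = ((l : ℚ) - (k : ℚ)) • R (l + k) := by
    apply Derivation.ext_of_adjoin_eq_top _ hgen
    rintro x hx
    simp only [Set.mem_iUnion, Set.mem_range] at hx
    obtain ⟨i, γ, rfl⟩ := hx
    rw [Derivation.commutator_apply, Derivation.smul_apply]
    rw [hR k hk i γ, hR l hl i γ, hR (l + k) (by omega) i γ, Derivation.map_smul, Derivation.map_smul,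
      hR l hl (i - k) γ, hR k hk (i - l) γ]
    have e1 : i - (k : ℤ) - l = i - ((l + k : ℕ) : ℤ) := by push_cast; ring
    have e2 : i - (l : ℤ) - k = i - ((l + k : ℕ) : ℤ) := by push_cast; ring
    rw [e1, e2, smul_smul, smul_smul, smul_smul, ← sub_smul]
    congr 1
    split_ifs with h1 h2 h3 h4 h5 <;> try (exfalso; omega)
    · -- main case : l + k ≤ i
      have hk1 : (i - (k : ℤ) - 1).toNat + 1 = (i - (k : ℤ)).toNat := by omega
      have hl1 : (i - (l : ℤ) - 1).toNat + 1 = (i - (l : ℤ)).toNat := by omega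
      have ca : ((i - (k : ℤ) - 1).toNat : ℚ) = (i : ℚ) - k - 1 := by
        have h0 : ((i - (k : ℤ) - 1).toNat : ℤ) = i - k - 1 := Int.toNat_of_nonneg (by omega)
        rw [show ((i - (k : ℤ) - 1).toNat : ℚ) = (((i - (k : ℤ) - 1).toNat : ℤ) : ℚ) by
          push_cast; ring, h0]
        push_cast; ring
      have cb : ((i - (l : ℤ) - 1).toNat : ℚ) = (i : ℚ) - l - 1 := by
        have h0 : ((i - (l : ℤ) - 1).toNat : ℤ) = i - l - 1 := Int.toNat_of_nonneg (by omega)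
        rw [show ((i - (l : ℤ) - 1).toNat : ℚ) = (((i - (l : ℤ) - 1).toNat : ℤ) : ℚ) by
          push_cast; ring, h0]
        push_cast; ring
      rw [← hk1, ← hl1, Nat.factorial_succ, Nat.factorial_succ]
      have f1 : ((i - (k : ℤ) - 1).toNat.factorial : ℚ) ≠ 0 := by
        exact_mod_cast (Nat.factorial_pos _).ne'
      have f2 : ((i - (l : ℤ) - 1).toNat.factorial : ℚ) ≠ 0 := by
        exact_mod_cast (Nat.factorial_pos _).ne'
      have f3 : ((i - 1).toNat.factorial : ℚ) ≠ 0 := by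
        exact_mod_cast (Nat.factorial_pos _).ne'
      simp only [Nat.cast_mul, Nat.cast_add, Nat.cast_one, ca, cb]
      field_simp
      ring
    all_goals simp
  intro a
  have := congrArg (fun D : Derivation ℚ A A => D a) key
  simpa [Derivation.commutator_apply] using this
end

section
/- Let R_l (l ≥ −1) and R_{−k} (k ≥ 2) be the derivations on the descendent algebra D defined by R_l(ch_i(γ)) = (∏_{j=0}^{l}(i+j)) ch_{i+l}(γ) and R_{−k}(ch_i(γ)) = ((i−k)!/(i−1)!) ch_{i−k}(γ) for i ≥ k (zero otherwise). Then applied to a single generator, ([R_l, R_{−k}]) ch_i(γ) = (−l−k)·R_{l−k}(ch_i(γ)) + correction terms supported only on generators ch_i(γ) with i < k or i < k − l; in particular when restricted to generators ch_i(γ) with i ≥ k and i ≥ k − l the identity [R_l, R_{−k}] ch_i(γ) = (−l−k) R_{l−k} ch_i(γ) holds (with R_{l−k} interpreted by the appropriate formula according to the sign of l−k). -/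
/-!
On a generator `ch i` with `i ≥ 1`, both `R_l` (as a rising product) and `R_{-k}` multiply by
`(i + d)! / (i - 1)!` and shift the index by `d`. Composing, `R_l R_{-k}` and `R_{-k} R_l`
multiply `ch i` by `(i - k) (i + l - k)! / (i - 1)!` and `(i + l) (i + l - k)! / (i - 1)!`, whose
difference is `(-l - k)` times the coefficient of `R_{l-k}`.
-/

open Finset Nat

lemma toNat_factorial_eq_mul (m : ℤ) (hm : 1 ≤ m) :
    ((m.toNat)! : ℚ) = m * ((m - 1).toNat)! := by
  obtain ⟨p, rfl⟩ : ∃ p : ℕ, m = p + 1 := ⟨(m - 1).toNat, by omega⟩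
  simp [show ((p : ℤ) + 1).toNat = p + 1 by omega, Nat.factorial_succ]

lemma prod_range_intCast_add_eq_factorial_div (i : ℤ) (hi : 1 ≤ i) (n : ℕ) :
    ∏ j ∈ range n, ((i : ℚ) + j) = ((i + n - 1).toNat ! : ℚ) / ((i - 1).toNat ! : ℚ) := by
  obtain ⟨p, rfl⟩ : ∃ p : ℕ, i = p + 1 := ⟨(i - 1).toNat, by omega⟩
  rw [eq_div_iff (by positivity), show ((p : ℤ) + 1 + n - 1).toNat = p + n by omega,
    show ((p : ℤ) + 1 - 1).toNat = p by omega, ← Nat.factorial_mul_ascFactorial,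
    Nat.ascFactorial_eq_prod_range]
  push_cast
  ring

-- Unlike the quotient form, this also holds at `m = 0`, the boundary generator `i = k`.
lemma toNat_factorial_mul_prod_range_add (m : ℤ) (hm : 0 ≤ m) (n : ℕ) (h : 1 ≤ m + n) :
    (m.toNat ! : ℚ) * ∏ j ∈ range n, ((m : ℚ) + j) = m * ((m + n - 1).toNat ! : ℚ) := by
  rcases hm.eq_or_lt with rfl | hm
  · obtain ⟨n, rfl⟩ : ∃ n', n = n' + 1 := ⟨n - 1, by omega⟩
    simp [prod_range_succ']
  · rw [prod_range_intCast_add_eq_factorial_div m hm n, toNat_factorial_eq_mul m hm]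
    field_simp

lemma virasoro_bracket_coeff (i l : ℤ) (k : ℕ) (hl : -1 ≤ l) (hk : 1 ≤ k) (hik : (k : ℤ) ≤ i)
    (hikl : (k : ℤ) - l ≤ i) :
    ((i - k).toNat ! : ℚ) / ((i - 1).toNat ! : ℚ) *
        ∏ j ∈ range (l + 1).toNat, (((i - k : ℤ) : ℚ) + j) -
      (∏ j ∈ range (l + 1).toNat, ((i : ℚ) + j)) *
        (((i + (l - k)).toNat ! : ℚ) / ((i + l - 1).toNat ! : ℚ)) =
      ((-l : ℚ) - k) * (((i + (l - k)).toNat ! : ℚ) / ((i - 1).toNat ! : ℚ)) := by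
  have hfirst := toNat_factorial_mul_prod_range_add (i - k) (by omega) (l + 1).toNat (by omega)
  rw [prod_range_intCast_add_eq_factorial_div i (by omega),
    show i + ((l + 1).toNat : ℤ) - 1 = i + l by omega,
    show i - k + ((l + 1).toNat : ℤ) - 1 = i + (l - k) by omega] at *
  rw [div_mul_eq_mul_div, hfirst, toNat_factorial_eq_mul (i + l) (by omega)]
  have : ((i + l - 1).toNat ! : ℚ) ≠ 0 := by positivity
  field_simp
  push_cast
  ring

lemma virasoro_target_coeff_eq (i l : ℤ) (k : ℕ) (hi : 1 ≤ i) (hikl : (k : ℤ) - l ≤ i) :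
    (if -1 ≤ l - k then ∏ j ∈ range (l - k + 1).toNat, ((i : ℚ) + j)
      else if (k : ℤ) - l ≤ i then ((i - (k - l)).toNat ! : ℚ) / ((i - 1).toNat ! : ℚ) else 0) =
      ((i + (l - k)).toNat ! : ℚ) / ((i - 1).toNat ! : ℚ) := by
  split_ifs with hlk
  · rw [prod_range_intCast_add_eq_factorial_div i hi,
      show i + ((l - k + 1).toNat : ℤ) - 1 = i + (l - k) by omega]
  · rw [show i - (k - l) = i + (l - k) by ring]

theorem stmt_6_general (A : Type*) [CommRing A] [Algebra ℚ A]
    (H : Type*) [AddCommGroup H] [Module ℚ H]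
    (ch : ℤ → H →ₗ[ℚ] A)
    (Rpos : ℤ → Derivation ℚ A A) (Rneg : ℕ → Derivation ℚ A A)
    (hRpos : ∀ l : ℤ, -1 ≤ l → ∀ (i : ℤ) (γ : H),
      Rpos l (ch i γ) = (∏ j ∈ Finset.range (l + 1).toNat, ((i : ℚ) + (j : ℚ))) • ch (i + l) γ)
    (hRneg : ∀ k : ℕ, 2 ≤ k → ∀ (i : ℤ) (γ : H),
      Rneg k (ch i γ) =
        (if (k : ℤ) ≤ i then ((i - k).toNat.factorial : ℚ) / ((i - 1).toNat.factorial : ℚ)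
          else 0) • ch (i - k) γ)
    (l : ℤ) (hl : -1 ≤ l) (k : ℕ) (hk : 2 ≤ k)
    (i : ℤ) (γ : H) (hik : (k : ℤ) ≤ i) (hikl : (k : ℤ) - l ≤ i) :
    Rpos l (Rneg k (ch i γ)) - Rneg k (Rpos l (ch i γ)) =
      ((-l : ℚ) - (k : ℚ)) •
        ((if -1 ≤ l - (k : ℤ)
            then ∏ j ∈ Finset.range (l - (k : ℤ) + 1).toNat, ((i : ℚ) + (j : ℚ))
            else if (k : ℤ) - l ≤ i
              then ((i - ((k : ℤ) - l)).toNat.factorial : ℚ) / ((i - 1).toNat.factorial : ℚ)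
              else 0) • ch (i + (l - (k : ℤ))) γ) := by
  rw [hRneg k hk i γ, if_pos hik, Derivation.map_smul, hRpos l hl, smul_smul,
    hRpos l hl, Derivation.map_smul, hRneg k hk, if_pos (by omega), smul_smul,
    show i - k + l = i + (l - k) by ring, show i + l - k = i + (l - k) by ring, ← sub_smul,
    virasoro_bracket_coeff i l k hl (by omega) hik hikl,
    virasoro_target_coeff_eq i l k (by omega) hikl, smul_smul]

/-- on generators ch_i(γ) with i ≥ k and i ≥ k − l, the mixed
Virasoro bracket satisfies [R_l, R_{−k}] ch_i(γ) = (−l−k)·R_{l−k}(ch_i(γ)),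
with R_{l−k} interpreted by the positive formula when l − k ≥ −1 and by the
negative formula otherwise. -/
theorem stmt_6 (A : Type*) [CommRing A] [Algebra ℚ A]
    (H : Type*) [AddCommGroup H] [Module ℚ H]
    (ch : ℤ → H →ₗ[ℚ] A)
    (hneg : ∀ i : ℤ, i < 0 → ch i = 0)
    (Rpos : ℤ → Derivation ℚ A A) (Rneg : ℕ → Derivation ℚ A A)
    (hRpos : ∀ l : ℤ, -1 ≤ l → ∀ (i : ℤ) (γ : H),
      Rpos l (ch i γ) = (∏ j ∈ Finset.range (l + 1).toNat, ((i : ℚ) + (j : ℚ))) • ch (i + l) γ)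
    (hRneg : ∀ k : ℕ, 2 ≤ k → ∀ (i : ℤ) (γ : H),
      Rneg k (ch i γ) =
        (if (k : ℤ) ≤ i then ((i - k).toNat.factorial : ℚ) / ((i - 1).toNat.factorial : ℚ)
          else 0) • ch (i - k) γ)
    (l : ℤ) (hl : -1 ≤ l) (k : ℕ) (hk : 2 ≤ k)
    (i : ℤ) (γ : H) (hik : (k : ℤ) ≤ i) (hikl : (k : ℤ) - l ≤ i) :
    Rpos l (Rneg k (ch i γ)) - Rneg k (Rpos l (ch i γ)) =
      ((-l : ℚ) - (k : ℚ)) •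
        ((if -1 ≤ l - (k : ℤ)
            then ∏ j ∈ Finset.range (l - (k : ℤ) + 1).toNat, ((i : ℚ) + (j : ℚ))
            else if (k : ℤ) - l ≤ i
              then ((i - ((k : ℤ) - l)).toNat.factorial : ℚ) / ((i - 1).toNat.factorial : ℚ)
              else 0) • ch (i + (l - (k : ℤ))) γ) :=
  stmt_6_general A H ch Rpos Rneg hRpos hRneg l hl k hk i γ hik hikl
end

section
/- Let L_k (k ≥ −1) be operators on a vector space W satisfying [R_{−1}, L_k] = (k+1) L_{k−1} for all k ≥ 0 and [R_{−1}, L_{−1}] = 0, where R_{−1} is locally nilpotent on W. Define L_inv = ∑_{j≥−1} ((−1)^j/(j+1)!) L_j R_{−1}^{j+1} (a finite sum on each element by local nilpotence). Then R_{−1} ∘ L_inv = 0. -/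
/-!
Write `a m = (-1)^(m+1) / m!`, so that `a m = -((m + 1) a (m + 1))`. Applying `R` to the term
`a m • L (m-1) (R^m w)` and using the bracket relation gives two pieces, and the recursion for `a`
makes them `f (m+1)` and `-f m` with `f m = -(m a m) • L (m-2) (R^m w)`. The sum therefore
telescopes to `f N`, which vanishes because `R^N w = 0`.
-/

open Finset

section Telescoping

variable {K W : Type*} [Ring K] [AddCommGroup W] [Module K W]
  {R : W →ₗ[K] W} {L : ℤ → W →ₗ[K] W}

theorem apply_apply_eq_add_of_bracket
    (hbr : ∀ k : ℤ, -1 ≤ k → ∀ w : W, R (L k w) - L k (R w) = ((k + 1 : ℤ) : K) • L (k - 1) w)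
    {k : ℤ} (hk : -1 ≤ k) (w : W) :
    R (L k w) = L k (R w) + ((k + 1 : ℤ) : K) • L (k - 1) w :=
  sub_eq_iff_eq_add'.mp (hbr k hk w)

theorem apply_sum_smul_iterate_eq_of_bracket
    (hbr : ∀ k : ℤ, -1 ≤ k → ∀ w : W, R (L k w) - L k (R w) = ((k + 1 : ℤ) : K) • L (k - 1) w)
    (a : ℕ → K) (ha : ∀ m : ℕ, a m = -(((m : K) + 1) * a (m + 1))) (w : W) (N : ℕ) :
    R (∑ m ∈ range N, a m • L ((m : ℤ) - 1) ((⇑R)^[m] w)) =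
      -((N : K) * a N) • L ((N : ℤ) - 2) ((⇑R)^[N] w) := by
  let f : ℕ → W := fun m => -((m : K) * a m) • L ((m : ℤ) - 2) ((⇑R)^[m] w)
  have step (m : ℕ) : R (a m • L ((m : ℤ) - 1) ((⇑R)^[m] w)) = f (m + 1) - f m := by
    have hcast : (((m : ℤ) - 1 + 1 : ℤ) : K) = m := by simp
    have hidx : (m : ℤ) - 1 - 1 = m - 2 := by ring
    have hidx' : (m : ℤ) + 1 - 2 = m - 1 := by ring
    rw [map_smul, apply_apply_eq_add_of_bracket hbr (by omega), hcast, hidx,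
      ← Function.iterate_succ_apply' R, smul_add, smul_smul]
    simp only [f, Nat.cast_succ, hidx', Nat.cast_comm (m : ℕ) (a m), neg_smul, sub_neg_eq_add]
    rw [← neg_smul, ← ha m]
  rw [map_sum, sum_congr rfl fun m _ => step m, sum_range_sub]
  simp [f]

end Telescoping

theorem neg_one_pow_div_factorial_eq_neg_succ_mul {F : Type*} [Field F] [CharZero F] (m : ℕ) :
    (-1 : F) ^ (m + 1) / m.factorial =
      -(((m : F) + 1) * ((-1 : F) ^ (m + 1 + 1) / (m + 1).factorial)) := by
  rw [Nat.factorial_succ, Nat.cast_mul, Nat.cast_succ]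
  field_simp
  ring

theorem stmt_8_general (F : Type*) [Field F] [CharZero F]
    (W : Type*) [AddCommGroup W] [Module F W]
    (R : W →ₗ[F] W) (L : ℤ → W →ₗ[F] W)
    (hbr : ∀ k : ℤ, -1 ≤ k → ∀ w : W,
      R (L k w) - L k (R w) = ((k + 1 : ℤ) : F) • L (k - 1) w)
    (w : W) (N : ℕ) (hN : (⇑R)^[N] w = 0) :
    R (∑ m ∈ Finset.range N,
        ((-1 : F) ^ (m + 1) / (m.factorial : F)) • L ((m : ℤ) - 1) ((⇑R)^[m] w)) = 0 := by
  rw [apply_sum_smul_iterate_eq_of_bracket hbr _ neg_one_pow_div_factorial_eq_neg_succ_mul, hN,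
    map_zero, smul_zero]

/-- R_{−1} ∘ L_inv = 0, where
L_inv = ∑_{j≥−1} ((−1)^j/(j+1)!) L_j R_{−1}^{j+1} (a finite sum on each element
by local nilpotence of R_{−1}; reindexed by m = j+1). -/
theorem stmt_8 (F : Type*) [Field F] [CharZero F]
    (W : Type*) [AddCommGroup W] [Module F W]
    (R : W →ₗ[F] W) (L : ℤ → W →ₗ[F] W)
    (hnil : ∀ w : W, ∃ N : ℕ, (⇑R)^[N] w = 0)
    (hbr : ∀ k : ℤ, -1 ≤ k → ∀ w : W,
      R (L k w) - L k (R w) = ((k + 1 : ℤ) : F) • L (k - 1) w)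
    (w : W) (N : ℕ) (hN : (⇑R)^[N] w = 0) :
    R (∑ m ∈ Finset.range N,
        ((-1 : F) ^ (m + 1) / (m.factorial : F)) • L ((m : ℤ) - 1) ((⇑R)^[m] w)) = 0 :=
  stmt_8_general F W R L hbr w N hN
end

section
/- Let T_k = ∑_{a+b=k} a! b! ch_a ch_b(td_S) be the multiplication operator on the descendent algebra of a surface with a fixed Künneth decomposition, and let R_{−k} (k ≥ 2) be the derivation with R_{−k}(ch_i(γ)) = ((i−k)!/(i−1)!) ch_{i−k}(γ) for i ≥ k, else 0, extended so that R_{−k} of a product of two generators ch_i(γ^L) ch_j(γ^R) obeys the Leibniz rule. Then R_{−k} T_l = (l+k) T_{l−k} when l ≥ k, and R_{−k} T_l = 0 when l < k, where T_{l−k} is the analogous multiplication element and the convention ch_{<0} = 0 is used. -/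
/-!
In the normalized generators `e_i(γ) = i! ch_i(γ)` the derivation acts by `R_{-k} e_i = i e_{i-k}`,
and `T_l = ∑_t ε_t ∑_{i+j=l} e_i(γ^L_t) e_j(γ^R_t)`. By the Leibniz rule `R_{-k} T_l` is a sum of
two shifted copies of this sum; both reindex to the antidiagonal `a + b = l - k`, with
coefficients `i = a + k` and `j = b + k`, which add up to `l + k`.
-/

open Finset Finset.Nat
open scoped Nat

section
variable {M : Type*} [AddCommMonoid M]

theorem Finset.Nat.sum_antidiagonal_ite_le_fst (k l : ℕ) (g : ℕ × ℕ → M) :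
    ∑ p ∈ antidiagonal l, (if k ≤ p.1 then g p else 0) =
      if k ≤ l then ∑ q ∈ antidiagonal (l - k), g (q.1 + k, q.2) else 0 := by
  rw [← sum_filter]
  split_ifs with hkl
  · rw [antidiagonal_filter_le_fst_of_le hkl, sum_map]
    rfl
  · rw [filter_eq_empty_iff.2 fun p hp => ?_, sum_empty]
    have := mem_antidiagonal.1 hp
    omega

theorem Finset.Nat.sum_antidiagonal_ite_le_snd (k l : ℕ) (g : ℕ × ℕ → M) :
    ∑ p ∈ antidiagonal l, (if k ≤ p.2 then g p else 0) =
      if k ≤ l then ∑ q ∈ antidiagonal (l - k), g (q.1, q.2 + k) else 0 := by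
  rw [← sum_filter]
  split_ifs with hkl
  · rw [antidiagonal_filter_le_snd_of_le hkl, sum_map]
    rfl
  · rw [filter_eq_empty_iff.2 fun p hp => ?_, sum_empty]
    have := mem_antidiagonal.1 hp
    omega

end

section
variable {R A : Type*} [CommSemiring R] [CommSemiring A] [Algebra R A]

theorem Derivation.map_sum_antidiagonal_mul (D : Derivation R A A) {k : ℕ} {e f : ℕ → A}
    (he : ∀ i, D (e i) = if k ≤ i then i • e (i - k) else 0)
    (hf : ∀ j, D (f j) = if k ≤ j then j • f (j - k) else 0) (l : ℕ) :
    D (∑ p ∈ antidiagonal l, e p.1 * f p.2) =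
      if k ≤ l then (l + k) • ∑ q ∈ antidiagonal (l - k), e q.1 * f q.2 else 0 := by
  have hterm : ∀ p : ℕ × ℕ, D (e p.1 * f p.2) =
      (if k ≤ p.1 then p.1 • (e (p.1 - k) * f p.2) else 0) +
        (if k ≤ p.2 then p.2 • (e p.1 * f (p.2 - k)) else 0) := by
    intro p
    rw [Derivation.leibniz, he, hf, add_comm]
    split_ifs <;> simp only [smul_eq_mul, nsmul_eq_mul, mul_zero, zero_add, add_zero] <;> ring
  simp only [map_sum, hterm, sum_add_distrib, sum_antidiagonal_ite_le_fst,
    sum_antidiagonal_ite_le_snd, Nat.add_sub_cancel]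
  split_ifs
  · rw [← sum_add_distrib, smul_sum]
    refine sum_congr rfl fun q hq => ?_
    rw [← add_smul]
    congr 1
    have := mem_antidiagonal.1 hq
    omega
  · rw [add_zero]
end

theorem Nat.factorial_mul_factorial_sub_div_factorial_pred {i k : ℕ} (hk : 1 ≤ k) (hki : k ≤ i) :
    (i ! : ℚ) * ((i - k)! / (i - 1)!) = i * (i - k)! := by
  rw [← Nat.mul_factorial_pred (by omega : i ≠ 0), Nat.cast_mul]
  field_simp

/-- R_{−k}(T_l) = (l+k) T_{l−k} for l ≥ k, and R_{−k}(T_l) = 0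
for l < k, where T_l is the Todd-twisted diagonal multiplication element. -/
theorem stmt_10 (A : Type*) [CommRing A] [Algebra ℚ A]
    (H : Type*) [AddCommGroup H] [Module ℚ H]
    (ch : ℕ → H →ₗ[ℚ] A)
    (n : ℕ) (ε : Fin n → ℚ) (γL γR : Fin n → H)
    (R : ℕ → Derivation ℚ A A)
    (hR : ∀ k : ℕ, 2 ≤ k → ∀ (i : ℕ) (γ : H),
      R k (ch i γ) =
        (if k ≤ i then ((i - k).factorial : ℚ) / ((i - 1).factorial : ℚ) else 0) •
          ch (i - k) γ)
    (T : ℕ → A)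
    (hT : ∀ l : ℕ, T l = ∑ i ∈ Finset.range (l + 1), ∑ t : Fin n,
      (ε t * (i.factorial : ℚ) * ((l - i).factorial : ℚ)) • (ch i (γL t) * ch (l - i) (γR t)))
    (k l : ℕ) (hk : 2 ≤ k) :
    (k ≤ l → R k (T l) = ((l : ℚ) + (k : ℚ)) • T (l - k)) ∧
    (l < k → R k (T l) = 0) := by
  set e : H → ℕ → A := fun γ i => (i ! : ℚ) • ch i γ with he_def
  have hRe : ∀ γ i, R k (e γ i) = if k ≤ i then i • e γ (i - k) else 0 := by
    intro γ i
    rw [he_def, Derivation.map_smul, hR k hk, smul_smul]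
    split_ifs with hki
    · rw [Nat.factorial_mul_factorial_sub_div_factorial_pred (by omega) hki, mul_smul,
        Nat.cast_smul_eq_nsmul]
    · rw [mul_zero, zero_smul]
  have hTe : ∀ l, T l = ∑ t, ε t • ∑ p ∈ antidiagonal l, e (γL t) p.1 * e (γR t) p.2 := by
    intro l
    rw [hT, sum_comm]
    refine sum_congr rfl fun t _ => ?_
    rw [sum_antidiagonal_eq_sum_range_succ (fun i j => e (γL t) i * e (γR t) j), smul_sum]
    refine sum_congr rfl fun i _ => ?_
    rw [he_def, smul_mul_smul_comm, smul_smul, mul_assoc]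
  have hRT : R k (T l) = if k ≤ l then ((l : ℚ) + k) • T (l - k) else 0 := by
    simp only [hTe, map_sum, Derivation.map_smul, (R k).map_sum_antidiagonal_mul (hRe _) (hRe _)]
    split_ifs
    · simp only [smul_sum, ← Nat.cast_add, Nat.cast_smul_eq_nsmul, smul_comm (ε _)]
    · simp
  exact ⟨fun hkl => by rw [hRT, if_pos hkl], fun hlk => by rw [hRT, if_neg (by omega)]⟩
end
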